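/- Coupling, part (b): let β > 0 and let γ be a loop supported in B_N with 𝒞_γ nonempty. Let η ~ P^γ_{B_N,β} (high-temperature model) and, independently, X₁ ~ Ψ_{1−1/cosh(2β)} (iid Bernoulli plaquette percolation). Identify η with the indicator function of (supp η)^+ on C_2(B_N)^+. Then the pointwise maximum max(η, X₁) : C_2(B_N)^+ → {0,1} has law 𝐏̂^γ_{B_N,β}, the law of the indicator n̂(p) = 1(n(p) > 0) of a random current n ~ 𝐏^γ_{B_N,β}. -/

import Mathlib

open scoped Classical

namespace LGT

/-- A site (vertex) of the lattice `ℤ^m`. -/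
abbrev Site (m : ℕ) := Fin m → ℤ

/-- The `i`-th unit vector. -/
def unitVec (m : ℕ) (i : Fin m) : Site m := fun j => if j = i then 1 else 0

/-- An oriented nearest-neighbour edge of `ℤ^m`: it joins `base` and `base + e_dir`,
oriented from `base` to `base + e_dir` when `ori = true`, and oppositely otherwise. -/
structure OEdge (m : ℕ) where
  base : Site m
  dir : Fin m
  ori : Bool
deriving DecidableEq

/-- An oriented plaquette of `ℤ^m` (valid when `dir1 < dir2`): the unit square with
corners `base, base + e_dir1, base + e_dir2, base + e_dir1 + e_dir2`, positively
oriented when `ori = true`. -/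
structure OPlaq (m : ℕ) where
  base : Site m
  dir1 : Fin m
  dir2 : Fin m
  ori : Bool
deriving DecidableEq

/-- The same edge with reversed orientation. -/
def OEdge.neg {m : ℕ} (e : OEdge m) : OEdge m := ⟨e.base, e.dir, !e.ori⟩

/-- The same plaquette with reversed orientation. -/
def OPlaq.neg {m : ℕ} (p : OPlaq m) : OPlaq m := ⟨p.base, p.dir1, p.dir2, !p.ori⟩

/-- The source vertex of an oriented edge. -/
def OEdge.src {m : ℕ} (e : OEdge m) : Site m :=
  if e.ori then e.base else e.base + unitVec m e.dir

/-- The target vertex of an oriented edge. -/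
def OEdge.tgt {m : ℕ} (e : OEdge m) : Site m :=
  if e.ori then e.base + unitVec m e.dir else e.base

/-- `x ∈ B_N = [-N,N]^m ∩ ℤ^m`. -/
def inBox (m N : ℕ) (x : Site m) : Prop := ∀ i, |x i| ≤ (N : ℤ)

/-- `C_1(B_N)`: oriented edges with both endpoints in `B_N`. -/
def C1 (m N : ℕ) : Set (OEdge m) :=
  {e | inBox m N e.base ∧ inBox m N (e.base + unitVec m e.dir)}

/-- The four corners of a plaquette. -/
def OPlaq.corners {m : ℕ} (p : OPlaq m) : List (Site m) :=
  [p.base, p.base + unitVec m p.dir1, p.base + unitVec m p.dir2,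
    p.base + unitVec m p.dir1 + unitVec m p.dir2]

/-- The four oriented boundary edges of an oriented plaquette. -/
def OPlaq.bdry {m : ℕ} (p : OPlaq m) : List (OEdge m) :=
  let l : List (OEdge m) :=
    [⟨p.base, p.dir1, true⟩, ⟨p.base + unitVec m p.dir1, p.dir2, true⟩,
     ⟨p.base + unitVec m p.dir2, p.dir1, false⟩, ⟨p.base, p.dir2, false⟩]
  if p.ori then l else l.map OEdge.neg

/-- `C_2(B_N)`: oriented plaquettes with all corners in `B_N`. -/
def C2 (m N : ℕ) : Set (OPlaq m) :=
  {p | p.dir1 < p.dir2 ∧ ∀ x ∈ p.corners, inBox m N x}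

/-- `C_2(B_N)^+`: positively oriented plaquettes of `C_2(B_N)`. -/
def C2plus (m N : ℕ) : Set (OPlaq m) := {p | p ∈ C2 m N ∧ p.ori = true}

/-- `supp ∂̂e`: the plaquettes of `C_2(B_N)` whose oriented boundary contains `e`. -/
def cob (m N : ℕ) (e : OEdge m) : Set (OPlaq m) := {p | p ∈ C2 m N ∧ e ∈ p.bdry}

/-- A loop: a finitely supported `ℤ`-valued function on oriented edges with values in
`{-1,0,1}`, odd under orientation reversal, whose boundary vanishes as a `0`-chain. -/
structure IsLoop (m : ℕ) (γ : OEdge m → ℤ) : Prop where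
  finite_supp : (Function.support γ).Finite
  vals : ∀ e, γ e = -1 ∨ γ e = 0 ∨ γ e = 1
  antisym : ∀ e, γ (OEdge.neg e) = - γ e
  bdry_zero : ∀ v : Site m,
    (∑ᶠ e : OEdge m, γ e *
      ((if OEdge.tgt e = v then 1 else 0) - (if OEdge.src e = v then (1 : ℤ) else 0))) = 0

/-- A loop supported in `B_N`. -/
def LoopIn (m N : ℕ) (γ : OEdge m → ℤ) : Prop :=
  IsLoop m γ ∧ ∀ e, γ e ≠ 0 → e ∈ C1 m N

/-- `Ω^1(B_N, ℤ₂)`: `ℤ₂`-valued one-forms on `C_1(B_N)`. -/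
def Omega1 (m N : ℕ) : Set (OEdge m → ZMod 2) :=
  {σ | (∀ e, e ∉ C1 m N → σ e = 0) ∧ ∀ e, σ (OEdge.neg e) = - σ e}

/-- The natural representation `ρ(g) = e^{iπ g} ∈ {±1}` of `ℤ₂`. -/
noncomputable def rho (g : ZMod 2) : ℝ := if g = 0 then 1 else -1

/-- The exterior derivative `dσ(p) = Σ_{e ∈ ∂p} σ(e)`. -/
def dOne {m : ℕ} (σ : OEdge m → ZMod 2) (p : OPlaq m) : ZMod 2 := (p.bdry.map σ).sum

/-- The Wilson action `S(σ) = -Σ_{p ∈ C_2(B_N)} ρ(dσ(p))`. -/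
noncomputable def action (m N : ℕ) (σ : OEdge m → ZMod 2) : ℝ :=
  - ∑ᶠ p ∈ C2 m N, rho (dOne σ p)

/-- The Wilson loop variable `W_γ(σ) = Π_{e ∈ (supp γ)^+} ρ(σ(e))`. -/
noncomputable def wilson (m : ℕ) (γ : OEdge m → ℤ) (σ : OEdge m → ZMod 2) : ℝ :=
  ∏ᶠ e ∈ {e : OEdge m | γ e ≠ 0 ∧ e.ori = true}, rho (σ e)

/-- `Z_{β,N}[γ] = Σ_{σ ∈ Ω^1(B_N,ℤ₂)} W_γ(σ) e^{-β S(σ)}`. -/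
noncomputable def Z (m N : ℕ) (β : ℝ) (γ : OEdge m → ℤ) : ℝ :=
  ∑ᶠ σ ∈ Omega1 m N, wilson m γ σ * Real.exp (- β * action m N σ)

/-- The finite-volume Gibbs expectation `E_{N,β}[f]`. -/
noncomputable def Eexp (m N : ℕ) (β : ℝ) (f : (OEdge m → ZMod 2) → ℝ) : ℝ :=
  (∑ᶠ σ ∈ Omega1 m N, f σ * Real.exp (- β * action m N σ)) /
    (∑ᶠ σ ∈ Omega1 m N, Real.exp (- β * action m N σ))

/-- `E_{N,β}[W_γ]`. -/
noncomputable def Ewilson (m N : ℕ) (β : ℝ) (γ : OEdge m → ℤ) : ℝ :=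
  Eexp m N β (wilson m γ)

/-- A current: an integer-valued `2`-form on `C_2(B_N)` that is nonnegative on
positively oriented plaquettes. -/
def IsCurrent (m N : ℕ) (n : OPlaq m → ℤ) : Prop :=
  (∀ p, p ∉ C2 m N → n p = 0) ∧ (∀ p, n (OPlaq.neg p) = - n p) ∧
    (∀ p ∈ C2plus m N, 0 ≤ n p)

/-- `𝒞_γ`: the currents with source `γ`. -/
def CurSet (m N : ℕ) (γ : OEdge m → ℤ) : Set (OPlaq m → ℤ) :=
  {n | IsCurrent m N n ∧ ∀ e ∈ C1 m N,
      ((γ e : ZMod 2) + ∑ᶠ p ∈ cob m N e, ((n p : ZMod 2))) = 0}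

/-- The weight `w_β(n) = Π_{p ∈ C_2(B_N)^+} (2β)^{n(p)}/n(p)!` of a current. -/
noncomputable def wgt (m N : ℕ) (β : ℝ) (n : OPlaq m → ℤ) : ℝ :=
  ∏ᶠ p ∈ C2plus m N, (2 * β) ^ (n p).toNat / (Nat.factorial (n p).toNat)

/-- `q ≤ n` on positively oriented plaquettes. -/
def leOn (m N : ℕ) (q n : OPlaq m → ℤ) : Prop := ∀ p ∈ C2plus m N, q p ≤ n p

/-- `𝒫_γ^{ht}`: `ℤ₂`-valued `2`-forms on `C_2(B_N)` with `δω = γ (mod 2)`. -/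
def HTset (m N : ℕ) (γ : OEdge m → ℤ) : Set (OPlaq m → ZMod 2) :=
  {ω | (∀ p, p ∉ C2 m N → ω p = 0) ∧ (∀ p, ω (OPlaq.neg p) = - ω p) ∧
    ∀ e ∈ C1 m N, (∑ᶠ p ∈ cob m N e, ω p) = (γ e : ZMod 2)}

/-- `(supp ω)^+`. -/
def suppPlus (m N : ℕ) (ω : OPlaq m → ZMod 2) : Set (OPlaq m) :=
  {p | p ∈ C2plus m N ∧ ω p ≠ 0}

/-- The high-temperature weight `(tanh 2β)^{|(supp ω)^+|}`. -/
noncomputable def htWeight (m N : ℕ) (β : ℝ) (ω : OPlaq m → ZMod 2) : ℝ :=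
  Real.tanh (2 * β) ^ (Nat.card ↥(suppPlus m N ω))

/-- The high-temperature model `P^γ_{B_N,β}`: probability mass of `ω ∈ 𝒫_γ^{ht}`. -/
noncomputable def htProb (m N : ℕ) (β : ℝ) (γ : OEdge m → ℤ) (ω : OPlaq m → ZMod 2) : ℝ :=
  htWeight m N β ω / ∑ᶠ ω' ∈ HTset m N γ, htWeight m N β ω'

/-- The random current model `𝐏^γ_{B_N,β}`: probability of an event `A ⊆ 𝒞_γ`. -/
noncomputable def rcProb (m N : ℕ) (β : ℝ) (γ : OEdge m → ℤ) (A : Set (OPlaq m → ℤ)) : ℝ :=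
  (∑' n : ↥(CurSet m N γ ∩ A), wgt m N β n) / (∑' n : ↥(CurSet m N γ), wgt m N β n)

/-- The trace `n̂` of a current: the set of positively oriented plaquettes where `n > 0`. -/
def hatCur (m N : ℕ) (n : OPlaq m → ℤ) : Set (OPlaq m) :=
  {p | p ∈ C2plus m N ∧ 0 < n p}

/-- The probability that iid Bernoulli plaquette percolation `Ψ_q` on `C_2(B_N)^+`
produces exactly the configuration (subset) `A`. -/
noncomputable def bernoulli (m N : ℕ) (q : ℝ) (A : Set (OPlaq m)) : ℝ :=
  ∏ᶠ p ∈ C2plus m N, (if p ∈ A then q else 1 - q)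

/-- `∂P ≡ γ (mod 2)`: for every edge `e ∈ C_1(B_N)` the number of plaquettes of `P`
whose boundary contains `e` or `-e` is congruent to `γ(e)` mod `2`. -/
def BdryCong (m N : ℕ) (P : Set (OPlaq m)) (γ : OEdge m → ℤ) : Prop :=
  ∀ e ∈ C1 m N,
    ((Nat.card ↥{p ∈ P | e ∈ p.bdry ∨ OEdge.neg e ∈ p.bdry} : ZMod 2)) = (γ e : ZMod 2)

/-- `𝒫_γ`: subsets of `C_2(B_N)^+` containing a subset with boundary `γ (mod 2)`. -/
def PlaqSet (m N : ℕ) (γ : OEdge m → ℤ) : Set (Set (OPlaq m)) :=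
  {P | P ⊆ C2plus m N ∧ ∃ P', P' ⊆ P ∧ BdryCong m N P' γ}

/-- `N₀(P)`: the number of `σ ∈ Ω^1(B_N,ℤ₂)` with `dσ(p) = 0` for all `p ∈ P`. -/
noncomputable def N0 (m N : ℕ) (P : Set (OPlaq m)) : ℕ :=
  Nat.card ↥{σ ∈ Omega1 m N | ∀ p ∈ P, dOne σ p = 0}

/-- The random cluster weight `N₀(P) q^{|P|} (1-q)^{|C_2(B_N)^+ ∖ P|}`. -/
noncomputable def rcmWeight (m N : ℕ) (q : ℝ) (P : Set (OPlaq m)) : ℝ :=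
  (N0 m N P : ℝ) * q ^ (Nat.card ↥P) * (1 - q) ^ (Nat.card ↥(C2plus m N \ P))

/-- The random cluster model `φ^γ_{B_N,q}`: probability mass of `P` (zero off `𝒫_γ`). -/
noncomputable def rcmProb (m N : ℕ) (q : ℝ) (γ : OEdge m → ℤ) (P : Set (OPlaq m)) : ℝ :=
  (if P ∈ PlaqSet m N γ then rcmWeight m N q P else 0) /
    ∑ᶠ P' ∈ PlaqSet m N γ, rcmWeight m N q P'

/-- `S_γ(P)`: the subsets of `P` with boundary `γ (mod 2)`. -/
def Sset (m N : ℕ) (γ : OEdge m → ℤ) (P : Set (OPlaq m)) : Set (Set (OPlaq m)) :=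
  {P' | P' ⊆ P ∧ BdryCong m N P' γ}

/-- The `ℤ₂`-valued `2`-form whose support among positively oriented plaquettes is `P'`. -/
noncomputable def formOf {m : ℕ} (P' : Set (OPlaq m)) : OPlaq m → ZMod 2 :=
  fun p => if p ∈ P' ∨ OPlaq.neg p ∈ P' then 1 else 0

/-- The vertices of the support of a loop. -/
def vertsOf (m : ℕ) (γ : OEdge m → ℤ) : Set (Site m) :=
  {x | ∃ e, γ e ≠ 0 ∧ (x = OEdge.src e ∨ x = OEdge.tgt e)}

/-- The graph (`ℓ¹`) distance between two sites of `ℤ^m`. -/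
def distL1 (m : ℕ) (x y : Site m) : ℕ := ∑ i, (x i - y i).natAbs

/-- The minimal graph distance between the supports of two loops. -/
noncomputable def suppDist (m : ℕ) (γ γ' : OEdge m → ℤ) : ℕ :=
  sInf {d | ∃ x ∈ vertsOf m γ, ∃ y ∈ vertsOf m γ', d = distL1 m x y}

/-- `area(γ) = min_{n ∈ 𝒞_γ} Σ_{p ∈ C_2(B_N)^+} n(p)`. -/
noncomputable def areaOf (m N : ℕ) (γ : OEdge m → ℤ) : ℕ :=
  sInf {k : ℕ | ∃ n ∈ CurSet m N γ, (∑ᶠ p ∈ C2plus m N, n p) = (k : ℤ)}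

/-- Translation of a loop by a lattice vector. -/
def translate (m : ℕ) (v : Site m) (γ : OEdge m → ℤ) : OEdge m → ℤ :=
  fun e => γ ⟨e.base - v, e.dir, e.ori⟩

/-- The site `a·e₀ + b·e₁` in the fixed coordinate plane spanned by the first two
coordinate directions. -/
def planeSite (m : ℕ) (h : 1 < m) (a b : ℤ) : Site m :=
  fun j => if j = (⟨0, by omega⟩ : Fin m) then a else if j = (⟨1, h⟩ : Fin m) then b else 0

/-- The axis-parallel rectangular loop `γ_{R,T}` with corners `0, R·e₀, R·e₀+T·e₁, T·e₁`
in the fixed coordinate plane spanned by the first two coordinate directions. -/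
noncomputable def rectLoop (m : ℕ) (h : 1 < m) (R T : ℕ) : OEdge m → ℤ := fun e =>
  (∑ k ∈ Finset.range R,
    ((if e = ⟨planeSite m h k 0, ⟨0, by omega⟩, true⟩ then (1 : ℤ) else 0)
      - (if e = OEdge.neg ⟨planeSite m h k 0, ⟨0, by omega⟩, true⟩ then 1 else 0)
      - (if e = ⟨planeSite m h k T, ⟨0, by omega⟩, true⟩ then 1 else 0)
      + (if e = OEdge.neg ⟨planeSite m h k T, ⟨0, by omega⟩, true⟩ then 1 else 0)))
  + (∑ k ∈ Finset.range T,
    ((if e = ⟨planeSite m h R k, ⟨1, h⟩, true⟩ then (1 : ℤ) else 0)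
      - (if e = OEdge.neg ⟨planeSite m h R k, ⟨1, h⟩, true⟩ then 1 else 0)
      - (if e = ⟨planeSite m h 0 k, ⟨1, h⟩, true⟩ then 1 else 0)
      + (if e = OEdge.neg ⟨planeSite m h 0 k, ⟨1, h⟩, true⟩ then 1 else 0)))

end LGT

/-!
Sort the currents `n ∈ 𝒞_γ` by their parity `ω = n mod 2`, which runs exactly over `𝒫_γ^{ht}`.
A current is a free `ℕ`-valued function on `C_2(B_N)^+`, so for fixed `ω` and fixed trace `ξ` the
weight sum factorises over plaquettes into `∑_{k ≡ ω(p), (k > 0 ↔ p ∈ ξ)} (2β)^k / k!`, which is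
`cosh 2β - 1`, `1`, `sinh 2β` or `0`. Each of these is `cosh 2β · (tanh 2β)^{[ω(p) ≠ 0]}` times the
probability that `max(η, X₁)` agrees with `ξ` at `p` given `η(p) = [ω(p) ≠ 0]`, when `X₁(p)` is
Bernoulli with parameter `1 - 1/cosh 2β`. Without the trace constraint the factors are `cosh 2β`
and `sinh 2β`, so the partition function is `(cosh 2β)^{|C_2(B_N)^+|}` times that of the
high-temperature model, and the ratio is the law of `max(η, X₁)`.
-/

open scoped ENNReal Nat

theorem ENNReal.tsum_pi_prod {ι κ : Type*} [hι : Fintype ι] (f : ι → κ → ℝ≥0∞) :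
    ∑' v : ι → κ, ∏ i, f i (v i) = ∏ i, ∑' k, f i k := by
  revert f
  refine Fintype.induction_empty_option ?_ ?_ ?_ ι (h_fintype := hι)
  · intro α β _ e ih f
    let := Fintype.ofEquiv β e.symm
    rw [← (e.arrowCongr (Equiv.refl κ)).tsum_eq, ← e.prod_comp]
    simpa [Equiv.arrowCongr_apply, ← e.prod_comp] using ih (fun a => f (e a))
  · simp
  · intro α _ ih f
    rw [← (Equiv.piOptionEquivProd (β := fun _ => κ)).symm.tsum_eq]
    simp only [Fintype.prod_option, Equiv.piOptionEquivProd, Equiv.symm_mk, Equiv.coe_fn_mk]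
    rw [ENNReal.tsum_prod', ← ih, ← ENNReal.tsum_mul_right]
    simp only [ENNReal.tsum_mul_left]

theorem Real.hasSum_pow_div_factorial_parity (x : ℝ) (z : ZMod 2) :
    HasSum (fun k : ℕ => if (k : ZMod 2) = z then x ^ k / k ! else 0)
      (if z = 0 then Real.cosh x else Real.sinh x) := by
  have heven (k : ℕ) : ((2 * k : ℕ) : ZMod 2) = 0 :=
    (ZMod.natCast_eq_zero_iff _ 2).2 (dvd_mul_right 2 k)
  have hodd (k : ℕ) : ((2 * k + 1 : ℕ) : ZMod 2) = 1 := by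
    rw [Nat.cast_succ, heven, zero_add]
  have h10 : (1 : ZMod 2) ≠ 0 := by decide
  obtain rfl | rfl : z = 0 ∨ z = 1 := by revert z; decide
  · rw [if_pos rfl, ← add_zero (Real.cosh x)]
    refine HasSum.even_add_odd ?_ ?_
    · simpa only [heven, if_true] using Real.hasSum_cosh x
    · simpa only [hodd, if_neg h10] using hasSum_zero
  · rw [if_neg h10, ← zero_add (Real.sinh x)]
    refine HasSum.even_add_odd ?_ ?_
    · simpa only [heven, if_neg h10.symm] using hasSum_zero
    · simpa only [hodd, if_true] using Real.hasSum_sinh x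

theorem Real.hasSum_pow_div_factorial_parity_pos_iff (x : ℝ) (z : ZMod 2) (Q : Prop) :
    HasSum (fun k : ℕ => if (k : ZMod 2) = z ∧ (0 < k ↔ Q) then x ^ k / k ! else 0)
      (if Q then (if z = 0 then Real.cosh x - 1 else Real.sinh x)
        else if z = 0 then 1 else 0) := by
  by_cases hQ : Q
  · have hf : (fun k : ℕ => if (k : ZMod 2) = z ∧ (0 < k ↔ Q) then x ^ k / k ! else 0) =
        Function.update (fun k : ℕ => if (k : ZMod 2) = z then x ^ k / k ! else 0) 0 0 := by
      ext (_ | k) <;> simp [hQ]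
    have hv : (if z = 0 then Real.cosh x - 1 else Real.sinh x) =
        0 - (if ((0 : ℕ) : ZMod 2) = z then x ^ 0 / (0 : ℕ)! else 0) +
          if z = 0 then Real.cosh x else Real.sinh x := by
      by_cases hz : z = 0 <;> simp [hz, eq_comm (a := (0 : ZMod 2))]
      ring
    rw [hf, if_pos hQ, hv]
    exact (Real.hasSum_pow_div_factorial_parity x z).update 0 0
  · rw [if_neg hQ]
    convert hasSum_ite_eq 0 (if z = 0 then (1 : ℝ) else 0) using 1
    ext (_ | k) <;> simp [hQ, eq_comm]

theorem Real.cosh_mul_tanh_mul_bernoulli_eq (x : ℝ) (z : ZMod 2) (Q : Prop) :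
    Real.cosh x * (if z = 0 then 1 else Real.tanh x) *
        (if z ≠ 0 then (if Q then 1 else 0)
          else if Q then 1 - 1 / Real.cosh x else 1 - (1 - 1 / Real.cosh x)) =
      if Q then (if z = 0 then Real.cosh x - 1 else Real.sinh x) else if z = 0 then 1 else 0 := by
  by_cases hz : z = 0 <;> by_cases hQ : Q <;> simp [hz, hQ, Real.tanh_eq_sinh_div_cosh] <;>
    field_simp

theorem Finset.prod_add_eq_sum_powerset_prod_ite {α R : Type*} [CommSemiring R] [DecidableEq α]
    (s : Finset α) (f g : α → R) :
    ∏ i ∈ s, (f i + g i) = ∑ t ∈ s.powerset, ∏ i ∈ s, if i ∈ t then f i else g i := by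
  rw [Finset.prod_add]
  refine Finset.sum_congr rfl fun t ht => ?_
  have hts : s ∩ t = t := Finset.inter_eq_right.2 (Finset.mem_powerset.1 ht)
  rw [Finset.prod_ite, Finset.filter_mem_eq_inter, hts, Finset.filter_not,
    Finset.filter_mem_eq_inter, hts]

theorem Finset.sum_powerset_prod_mul_ite_union_eq {α R : Type*} [CommRing R] [DecidableEq α]
    {s : Finset α} {η ξ : Set α} (hη : η ⊆ s) (hξ : ξ ⊆ s) (q : R) :
    ∑ t ∈ s.powerset, (∏ i ∈ s, if i ∈ t then q else 1 - q) * (if η ∪ ↑t = ξ then 1 else 0) =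
      ∏ i ∈ s, if i ∈ η then (if i ∈ ξ then 1 else 0) else if i ∈ ξ then q else 1 - q := by
  have hunion (t : Finset α) (ht : t ⊆ s) :
      (η ∪ ↑t = ξ) ↔ ∀ i ∈ s, (i ∈ η ∨ i ∈ t ↔ i ∈ ξ) := by
    refine ⟨fun h i _ => by simp [← h], fun h => Set.ext fun i => ?_⟩
    by_cases hi : i ∈ s
    · simpa using h i hi
    · exact iff_of_false (by rintro (h' | h'); exacts [hi (hη h'), hi (ht h')]) (hi <| hξ ·)
  calc _ = ∑ t ∈ s.powerset, ∏ i ∈ s,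
        if i ∈ t then (if i ∈ ξ then q else 0) else if (i ∈ η ↔ i ∈ ξ) then 1 - q else 0 := by
        refine Finset.sum_congr rfl fun t ht => ?_
        simp only [hunion t (Finset.mem_powerset.1 ht)]
        rw [← Finset.prod_boole, ← Finset.prod_mul_distrib]
        refine Finset.prod_congr rfl fun i _ => ?_
        by_cases hit : i ∈ t <;> by_cases hiξ : i ∈ ξ <;> simp [hit, hiξ]
    _ = _ := by
        rw [← Finset.prod_add_eq_sum_powerset_prod_ite]
        refine Finset.prod_congr rfl fun i _ => ?_
        by_cases hiη : i ∈ η <;> by_cases hiξ : i ∈ ξ <;> simp [hiη, hiξ]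

namespace LGT

variable {m N : ℕ}

theorem inBox_finite (m N : ℕ) : {x : Site m | inBox m N x}.Finite :=
  (Set.Finite.pi' fun _ => Set.finite_Icc (-(N : ℤ)) N).subset fun _ hx i => abs_le.mp (hx i)

theorem C2_finite (m N : ℕ) : (C2 m N).Finite := by
  refine (((inBox_finite m N).prod (Set.finite_univ (α := Fin m × Fin m × Bool))).image
    fun x => (⟨x.1, x.2.1, x.2.2.1, x.2.2.2⟩ : OPlaq m)).subset ?_
  rintro ⟨b, d1, d2, o⟩ hp
  exact ⟨(b, d1, d2, o), ⟨hp.2 b (by simp [OPlaq.corners]), trivial⟩, rfl⟩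

theorem HTset_finite (m N : ℕ) (γ : OEdge m → ℤ) : (HTset m N γ).Finite := by
  have := (C2_finite m N).to_subtype
  refine Set.Finite.of_finite_image (f := (C2 m N).domRestrict) (Set.toFinite _) ?_
  intro ω hω ω' hω' h
  funext p
  by_cases hp : p ∈ C2 m N
  · exact congrFun h ⟨p, hp⟩
  · rw [hω.1 p hp, hω'.1 p hp]

theorem C2plus_subset_C2 : C2plus m N ⊆ C2 m N := fun _ hp => hp.1

noncomputable def C2plusFinset (m N : ℕ) : Finset (OPlaq m) :=
  ((C2_finite m N).subset C2plus_subset_C2).toFinset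

@[simp]
theorem mem_C2plusFinset {p : OPlaq m} : p ∈ C2plusFinset m N ↔ p ∈ C2plus m N :=
  Set.Finite.mem_toFinset _

@[simp]
theorem coe_C2plusFinset : (C2plusFinset m N : Set (OPlaq m)) = C2plus m N :=
  Set.Finite.coe_toFinset _

@[simp]
theorem OPlaq.neg_neg (p : OPlaq m) : p.neg.neg = p := by
  cases p; simp [OPlaq.neg]

theorem OPlaq.neg_mem_C2 {p : OPlaq m} : p.neg ∈ C2 m N ↔ p ∈ C2 m N := Iff.rfl

theorem neg_notMem_C2plus {p : OPlaq m} (hp : p ∈ C2plus m N) : p.neg ∉ C2plus m N := by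
  intro h
  simpa [OPlaq.neg, hp.2] using h.2

theorem mem_C2plus_or_neg_mem {p : OPlaq m} (hp : p ∈ C2 m N) :
    p ∈ C2plus m N ∨ p.neg ∈ C2plus m N := by
  cases ho : p.ori
  · exact Or.inr ⟨hp, by simp [OPlaq.neg, ho]⟩
  · exact Or.inl ⟨hp, ho⟩

theorem eq_of_eqOn_C2plus {G : Type*} [AddGroup G] {f g : OPlaq m → G}
    (hf : ∀ p, p ∉ C2 m N → f p = 0) (hg : ∀ p, p ∉ C2 m N → g p = 0)
    (hf' : ∀ p, f p.neg = - f p) (hg' : ∀ p, g p.neg = - g p)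
    (h : ∀ p ∈ C2plus m N, f p = g p) : f = g := by
  funext p
  by_cases hp : p ∈ C2 m N
  · rcases mem_C2plus_or_neg_mem hp with hp | hp
    · exact h p hp
    · rw [← p.neg_neg, hf', hg', h _ hp]
  · rw [hf p hp, hg p hp]

noncomputable def currentOf (v : C2plusFinset m N → ℕ) : OPlaq m → ℤ := fun p =>
  if h : p ∈ C2plusFinset m N then v ⟨p, h⟩
  else if h' : p.neg ∈ C2plusFinset m N then -v ⟨p.neg, h'⟩ else 0

theorem currentOf_apply (v : C2plusFinset m N → ℕ) (p : C2plusFinset m N) :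
    currentOf v p = v p := dif_pos p.2

theorem currentOf_neg (v : C2plusFinset m N → ℕ) (p : OPlaq m) :
    currentOf v p.neg = - currentOf v p := by
  by_cases hp : p ∈ C2plusFinset m N
  · have hn : p.neg ∉ C2plusFinset m N := by simpa using neg_notMem_C2plus (by simpa using hp)
    simp [currentOf, hp, hn]
  · by_cases hn : p.neg ∈ C2plusFinset m N <;> simp [currentOf, hp, hn]

theorem isCurrent_currentOf (v : C2plusFinset m N → ℕ) : IsCurrent m N (currentOf v) := by
  refine ⟨fun p hp => ?_, currentOf_neg v, fun p hp => ?_⟩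
  · have h1 : p ∉ C2plusFinset m N := fun h => hp (C2plus_subset_C2 (by simpa using h))
    have h2 : p.neg ∉ C2plusFinset m N := fun h =>
      hp (OPlaq.neg_mem_C2.mp (C2plus_subset_C2 (by simpa using h)))
    simp [currentOf, h1, h2]
  · simp [currentOf, hp]

theorem currentOf_injective : Function.Injective (currentOf (m := m) (N := N)) := by
  intro v w h
  funext p
  simpa [currentOf_apply] using congrFun h p

theorem IsCurrent.eq_currentOf {n : OPlaq m → ℤ} (hn : IsCurrent m N n) :
    n = currentOf fun p : C2plusFinset m N => (n p).toNat :=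
  eq_of_eqOn_C2plus hn.1 (isCurrent_currentOf _).1 hn.2.1 (currentOf_neg _) fun p hp => by
    simp [currentOf, hp, hn.2.2 p hp]

theorem mem_CurSet_iff {γ : OEdge m → ℤ} {n : OPlaq m → ℤ} :
    n ∈ CurSet m N γ ↔ IsCurrent m N n ∧ (fun p => (n p : ZMod 2)) ∈ HTset m N γ := by
  refine and_congr_right fun hn => ?_
  have hcocycle (e : OEdge m) : ((γ e : ZMod 2) + ∑ᶠ p ∈ cob m N e, (n p : ZMod 2)) = 0 ↔
      ∑ᶠ p ∈ cob m N e, (n p : ZMod 2) = γ e := by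
    rw [add_eq_zero_iff_eq_neg', ZMod.neg_eq_self_mod_two, eq_comm]
  exact ⟨fun h => ⟨fun p hp => by simp [hn.1 p hp], fun p => by simp [hn.2.1 p],
    fun e he => (hcocycle e).1 (h e he)⟩, fun h e he => (hcocycle e).2 (h.2.2 e he)⟩

theorem intCast_eq_iff_eqOn_C2plus {γ : OEdge m → ℤ} {n : OPlaq m → ℤ} (hn : IsCurrent m N n)
    {ω : OPlaq m → ZMod 2} (hω : ω ∈ HTset m N γ) :
    (fun p => (n p : ZMod 2)) = ω ↔ ∀ p ∈ C2plus m N, (n p : ZMod 2) = ω p :=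
  ⟨fun h p _ => congrFun h p, eq_of_eqOn_C2plus (fun p hp => by simp [hn.1 p hp]) hω.1
    (fun p => by simp [hn.2.1 p]) hω.2.1⟩

theorem wgt_eq_prod (β : ℝ) (n : OPlaq m → ℤ) :
    wgt m N β n = ∏ p ∈ C2plusFinset m N, (2 * β) ^ (n p).toNat / (n p).toNat ! := by
  rw [wgt, ← coe_C2plusFinset, finprod_mem_coe_finset]

theorem hatCur_eq_iff {n : OPlaq m → ℤ} {ξ : Set (OPlaq m)} (hξ : ξ ⊆ C2plus m N) :
    hatCur m N n = ξ ↔ ∀ p ∈ C2plus m N, (0 < (n p).toNat ↔ p ∈ ξ) := by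
  simp only [Set.ext_iff, hatCur, Set.mem_ofPred_eq, Int.lt_toNat, Nat.cast_zero]
  exact ⟨fun h p hp => by simpa [hp] using h p,
    fun h p => ⟨fun hp => (h p hp.1).1 hp.2, fun hp => ⟨hξ hp, (h p (hξ hp)).2 hp⟩⟩⟩

theorem indicator_wgt_eq_sum_prod {β : ℝ} (hβ : 0 ≤ β) (γ : OEdge m → ℤ) (C : OPlaq m → ℕ → Prop)
    {n : OPlaq m → ℤ} (hn : IsCurrent m N n) :
    (CurSet m N γ ∩ {n | ∀ p ∈ C2plus m N, C p (n p).toNat}).indicator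
        (fun n => ENNReal.ofReal (wgt m N β n)) n =
      ∑ ω ∈ (HTset_finite m N γ).toFinset, ∏ p ∈ C2plusFinset m N,
        ENNReal.ofReal (if ((n p).toNat : ZMod 2) = ω p ∧ C p (n p).toNat then
          (2 * β) ^ (n p).toNat / (n p).toNat ! else 0) := by
  have hterm : ∀ ω ∈ (HTset_finite m N γ).toFinset, ∏ p ∈ C2plusFinset m N,
      ENNReal.ofReal (if ((n p).toNat : ZMod 2) = ω p ∧ C p (n p).toNat then
        (2 * β) ^ (n p).toNat / (n p).toNat ! else 0) =
      if (fun p => (n p : ZMod 2)) = ω then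
        (if ∀ p ∈ C2plus m N, C p (n p).toNat then ENNReal.ofReal (wgt m N β n) else 0)
      else 0 := by
    intro ω hω
    rw [← ENNReal.ofReal_prod_of_nonneg (fun p _ => by split_ifs <;> positivity),
      Finset.prod_ite_zero, intCast_eq_iff_eqOn_C2plus hn ((HTset_finite m N γ).mem_toFinset.1 hω),
      wgt_eq_prod]
    have hcast : ∀ p ∈ C2plus m N, ((n p).toNat : ZMod 2) = (n p : ZMod 2) := fun p hp => by
      rw [← Int.cast_natCast, Int.toNat_of_nonneg (hn.2.2 p hp)]
    simp only [mem_C2plusFinset, forall_and]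
    split_ifs <;> simp_all
  rw [Finset.sum_congr rfl hterm, Finset.sum_ite_eq, Set.indicator_apply]
  simp only [Set.mem_inter_iff, mem_CurSet_iff, hn, true_and, (HTset_finite m N γ).mem_toFinset,
    Set.mem_ofPred_eq]
  split_ifs <;> simp_all

theorem tsum_ofReal_wgt_eq_sum_prod {β : ℝ} (hβ : 0 ≤ β) (γ : OEdge m → ℤ)
    (C : OPlaq m → ℕ → Prop) :
    ∑' n : ↥(CurSet m N γ ∩ {n | ∀ p ∈ C2plus m N, C p (n p).toNat}),
        ENNReal.ofReal (wgt m N β n) =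
      ∑ ω ∈ (HTset_finite m N γ).toFinset, ∏ p ∈ C2plusFinset m N, ∑' k : ℕ,
        ENNReal.ofReal (if (k : ZMod 2) = ω p ∧ C p k then (2 * β) ^ k / k ! else 0) := by
  have hrange : ((CurSet m N γ ∩ {n | ∀ p ∈ C2plus m N, C p (n p).toNat}).indicator
      fun n => ENNReal.ofReal (wgt m N β n)).support ⊆ Set.range currentOf :=
    Set.support_indicator_subset.trans fun n hn =>
      ⟨_, (mem_CurSet_iff.1 hn.1).1.eq_currentOf.symm⟩
  rw [tsum_subtype _ fun n => ENNReal.ofReal (wgt m N β n), ← currentOf_injective.tsum_eq hrange,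
    tsum_congr fun v => indicator_wgt_eq_sum_prod hβ γ C (isCurrent_currentOf v),
    Summable.tsum_finsetSum fun _ _ => ENNReal.summable]
  refine Finset.sum_congr rfl fun ω _ => ?_
  rw [← Finset.prod_coe_sort, ← ENNReal.tsum_pi_prod]
  refine tsum_congr fun v => ?_
  rw [← Finset.prod_coe_sort]
  simp only [currentOf_apply, Int.toNat_natCast]

theorem tsum_wgt_eq_sum_prod {β : ℝ} (hβ : 0 ≤ β) (γ : OEdge m → ℤ) (C : OPlaq m → ℕ → Prop)
    (a : OPlaq m → ZMod 2 → ℝ) (ha : ∀ p z, HasSum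
      (fun k : ℕ => if (k : ZMod 2) = z ∧ C p k then (2 * β) ^ k / k ! else 0) (a p z)) :
    ∑' n : ↥(CurSet m N γ ∩ {n | ∀ p ∈ C2plus m N, C p (n p).toNat}), wgt m N β n =
      ∑ ω ∈ (HTset_finite m N γ).toFinset, ∏ p ∈ C2plusFinset m N, a p (ω p) := by
  have hterm_nonneg (p : OPlaq m) (z : ZMod 2) (k : ℕ) :
      0 ≤ if (k : ZMod 2) = z ∧ C p k then (2 * β) ^ k / k ! else 0 := by
    split_ifs <;> positivity
  have ha_nonneg (p : OPlaq m) (z : ZMod 2) : 0 ≤ a p z := (ha p z).nonneg (hterm_nonneg p z)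
  have hwgt_nonneg (n : OPlaq m → ℤ) : 0 ≤ wgt m N β n := by
    rw [wgt_eq_prod]
    exact Finset.prod_nonneg fun p _ => by positivity
  calc _ = (∑' n : ↥(CurSet m N γ ∩ {n | ∀ p ∈ C2plus m N, C p (n p).toNat}),
        ENNReal.ofReal (wgt m N β n)).toReal := by
        rw [ENNReal.tsum_toReal_eq fun _ => ENNReal.ofReal_ne_top]
        simp only [ENNReal.toReal_ofReal (hwgt_nonneg _)]
    _ = _ := by
      simp_rw [tsum_ofReal_wgt_eq_sum_prod hβ γ C,
        ← ENNReal.ofReal_tsum_of_nonneg (hterm_nonneg _ _) (ha _ _).summable, (ha _ _).tsum_eq]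
      rw [ENNReal.toReal_sum fun _ _ => ENNReal.prod_ne_top fun _ _ => ENNReal.ofReal_ne_top]
      simp only [ENNReal.toReal_prod, ENNReal.toReal_ofReal (ha_nonneg _ _)]

theorem bernoulli_eq_prod (q : ℝ) (A : Set (OPlaq m)) :
    bernoulli m N q A = ∏ p ∈ C2plusFinset m N, if p ∈ A then q else 1 - q := by
  rw [bernoulli, ← coe_C2plusFinset, finprod_mem_coe_finset]

theorem finsum_bernoulli_mul_union_eq (q : ℝ) {η ξ : Set (OPlaq m)} (hη : η ⊆ C2plus m N)
    (hξ : ξ ⊆ C2plus m N) :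
    ∑ᶠ A ∈ {A : Set (OPlaq m) | A ⊆ C2plus m N},
        bernoulli m N q A * (if η ∪ A = ξ then 1 else 0) =
      ∏ p ∈ C2plusFinset m N,
        if p ∈ η then (if p ∈ ξ then 1 else 0) else if p ∈ ξ then q else 1 - q := by
  have hsubsets : {A : Set (OPlaq m) | A ⊆ C2plus m N} =
      (↑) '' ((C2plusFinset m N).powerset : Set (Finset (OPlaq m))) := by
    ext A
    refine ⟨fun hA => ⟨((C2plusFinset m N).finite_toSet.subset (by simpa using hA)).toFinset,
      by simpa using hA, by simp⟩, ?_⟩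
    rintro ⟨B, hB, rfl⟩
    simpa [← coe_C2plusFinset] using hB
  rw [hsubsets, finsum_mem_image Finset.coe_injective.injOn, finsum_mem_coe_finset,
    ← Finset.sum_powerset_prod_mul_ite_union_eq (by simpa using hη) (by simpa using hξ)]
  simp only [bernoulli_eq_prod, Finset.mem_coe]

theorem htWeight_eq_prod (β : ℝ) (ω : OPlaq m → ZMod 2) :
    htWeight m N β ω = ∏ p ∈ C2plusFinset m N, if ω p = 0 then 1 else Real.tanh (2 * β) := by
  have hsupp : suppPlus m N ω = ↑((C2plusFinset m N).filter fun p => ω p ≠ 0) := by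
    ext p
    simp [suppPlus]
  rw [htWeight, hsupp, Nat.card_coe_set_eq, Set.ncard_coe_finset, Finset.prod_ite,
    Finset.prod_const_one, one_mul, Finset.prod_const]

theorem cosh_pow_mul_htWeight_eq_prod (β : ℝ) (ω : OPlaq m → ZMod 2) :
    Real.cosh (2 * β) ^ (C2plusFinset m N).card * htWeight m N β ω =
      ∏ p ∈ C2plusFinset m N, if ω p = 0 then Real.cosh (2 * β) else Real.sinh (2 * β) := by
  rw [htWeight_eq_prod, ← Finset.prod_const, ← Finset.prod_mul_distrib]
  refine Finset.prod_congr rfl fun p _ => ?_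
  split_ifs <;> simp [Real.tanh_eq_sinh_div_cosh, mul_div_cancel₀ _ (Real.cosh_pos _).ne']

theorem cosh_pow_mul_htWeight_mul_finsum_bernoulli_eq_prod (β : ℝ) (ω : OPlaq m → ZMod 2)
    {ξ : Set (OPlaq m)} (hξ : ξ ⊆ C2plus m N) :
    Real.cosh (2 * β) ^ (C2plusFinset m N).card * (htWeight m N β ω *
        ∑ᶠ A ∈ {A : Set (OPlaq m) | A ⊆ C2plus m N},
          bernoulli m N (1 - 1 / Real.cosh (2 * β)) A * (if suppPlus m N ω ∪ A = ξ then 1 else 0)) =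
      ∏ p ∈ C2plusFinset m N,
        if p ∈ ξ then (if ω p = 0 then Real.cosh (2 * β) - 1 else Real.sinh (2 * β))
        else if ω p = 0 then 1 else 0 := by
  rw [finsum_bernoulli_mul_union_eq _ (fun _ hp => hp.1) hξ, htWeight_eq_prod, ← Finset.prod_const,
    ← Finset.prod_mul_distrib, ← Finset.prod_mul_distrib]
  refine Finset.prod_congr rfl fun p hp => ?_
  have hsupp : p ∈ suppPlus m N ω ↔ ω p ≠ 0 := by simp [suppPlus, mem_C2plusFinset.1 hp]
  simp only [hsupp, ← mul_assoc]
  exact Real.cosh_mul_tanh_mul_bernoulli_eq _ _ _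

theorem tsum_wgt_hatCur_eq {β : ℝ} (hβ : 0 ≤ β) (γ : OEdge m → ℤ) {ξ : Set (OPlaq m)}
    (hξ : ξ ⊆ C2plus m N) :
    ∑' n : ↥(CurSet m N γ ∩ {n | hatCur m N n = ξ}), wgt m N β n =
      ∑ ω ∈ (HTset_finite m N γ).toFinset, ∏ p ∈ C2plusFinset m N,
        if p ∈ ξ then (if ω p = 0 then Real.cosh (2 * β) - 1 else Real.sinh (2 * β))
        else if ω p = 0 then 1 else 0 := by
  have htrace : CurSet m N γ ∩ {n | hatCur m N n = ξ} =
      CurSet m N γ ∩ {n | ∀ p ∈ C2plus m N, (0 < (n p).toNat ↔ p ∈ ξ)} := by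
    simp only [hatCur_eq_iff hξ]
  rw [htrace]
  -- `convert` only reconciles the `Decidable` instances of the two `if`s.
  exact tsum_wgt_eq_sum_prod hβ γ _ _ fun p z => by
    convert Real.hasSum_pow_div_factorial_parity_pos_iff (2 * β) z (p ∈ ξ)

theorem tsum_wgt_CurSet_eq {β : ℝ} (hβ : 0 ≤ β) (γ : OEdge m → ℤ) :
    ∑' n : ↥(CurSet m N γ), wgt m N β n =
      ∑ ω ∈ (HTset_finite m N γ).toFinset, ∏ p ∈ C2plusFinset m N,
        if ω p = 0 then Real.cosh (2 * β) else Real.sinh (2 * β) := by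
  have h := tsum_wgt_eq_sum_prod (N := N) hβ γ (fun _ _ => True) _
    fun _ z => by simpa using Real.hasSum_pow_div_factorial_parity (2 * β) z
  rwa [show {n : OPlaq m → ℤ | ∀ p ∈ C2plus m N, True} = Set.univ from
    Set.eq_univ_of_forall fun _ _ _ => trivial, Set.inter_univ] at h

theorem coupling_b_general (m N : ℕ) (β : ℝ) (hβ : 0 < β)
    (γ : OEdge m → ℤ) :
    ∀ ξ : Set (OPlaq m), ξ ⊆ C2plus m N →
      (∑ᶠ ω ∈ HTset m N γ, ∑ᶠ A ∈ {A : Set (OPlaq m) | A ⊆ C2plus m N},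
          htProb m N β γ ω * bernoulli m N (1 - 1 / Real.cosh (2 * β)) A *
            (if suppPlus m N ω ∪ A = ξ then 1 else 0))
        = rcProb m N β γ {n | hatCur m N n = ξ} := by
  intro ξ hξ
  rw [rcProb, tsum_wgt_hatCur_eq hβ.le γ hξ, tsum_wgt_CurSet_eq hβ.le γ,
    finsum_mem_eq_finite_toFinset_sum _ (HTset_finite m N γ)]
  simp only [← cosh_pow_mul_htWeight_mul_finsum_bernoulli_eq_prod β _ hξ,
    ← cosh_pow_mul_htWeight_eq_prod, ← Finset.mul_sum, Finset.sum_div,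
    mul_div_mul_left _ _ (pow_ne_zero _ (Real.cosh_pos (2 * β)).ne')]
  refine Finset.sum_congr rfl fun ω _ => ?_
  simp only [htProb, finsum_mem_eq_finite_toFinset_sum _ (HTset_finite m N γ), mul_assoc,
    ← mul_finsum_mem]
  ring

/-- **Coupling, part (b)**: `max(η, X₁)` with `η ~ P^γ` and `X₁ ~ Ψ_{1-1/cosh 2β}`
independent has the law `𝐏̂^γ` of the trace of a random current. -/
theorem coupling_b (m N : ℕ) (hm : 3 ≤ m) (hN : 1 ≤ N) (β : ℝ) (hβ : 0 < β)
    (γ : OEdge m → ℤ) (hγ : LoopIn m N γ) (hne : (CurSet m N γ).Nonempty) :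
    ∀ ξ : Set (OPlaq m), ξ ⊆ C2plus m N →
      (∑ᶠ ω ∈ HTset m N γ, ∑ᶠ A ∈ {A : Set (OPlaq m) | A ⊆ C2plus m N},
          htProb m N β γ ω * bernoulli m N (1 - 1 / Real.cosh (2 * β)) A *
            (if suppPlus m N ω ∪ A = ξ then 1 else 0))
        = rcProb m N β γ {n | hatCur m N n = ξ} :=
  coupling_b_general m N β hβ γ

end LGT
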